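/- arXiv:math/0011198 — 10 statements merged into one kernel-verified Lean document; each statement's English description precedes it below -/
import Mathlib

section
/- Let (S, L) be an abstract cubic, let W be a group of permutations of S preserving L, acting on G_S by automorphisms via w · t_x = t_{w(x)}, and let G = G_S ⋊ W be the corresponding semidirect product. Let W' ⊆ W be a finite subgroup and let (g_i)_{i∈I} be a family of elements of G_S such that ∪_{i∈I} δ̃(g_i) is infinite. Then the subgroup of G generated by W' together with all the g_i is not finitely generated. -/
/-! If the subgroup were generated by a finite set `F`, let `T` be the `W'`-saturation of the
supports of the `G_S`-components of `F`; it is finite. Since `δ̃(w · a) = w(δ̃(a))`, the elements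
whose `G_S`-component has support in `T` and whose `W`-component lies in `W'` form a subgroup
containing `F`, hence every `g_i`, so `⋃ δ̃(g_i) ⊆ T`. -/

/-- The defining relators of the reflection group of an abstract cubic `(S, L)`:
`(t_x)^2` for all `x`, and `(t_x t_y t_z)^2` for all collinear triples `(x,y,z) ∈ L`. -/
def cubicRels (S : Type*) (L : S → S → S → Prop) : Set (FreeGroup S) :=
  {r | (∃ x : S, r = FreeGroup.of x ^ 2) ∨
    ∃ x y z : S, L x y z ∧ r = (FreeGroup.of x * FreeGroup.of y * FreeGroup.of z) ^ 2}

/-- The reflection group `G_S` of an abstract cubic, as a presented group. -/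
abbrev ReflGroup (S : Type*) (L : S → S → S → Prop) : Type _ :=
  PresentedGroup (cubicRels S L)

/-- The generator (reflection) `t_x` of the reflection group. -/
def tgen (S : Type*) (L : S → S → S → Prop) (x : S) : ReflGroup S L :=
  PresentedGroup.of x

open Pointwise

namespace SemidirectProduct

variable {N G : Type*} [Group N] [Group G] {φ : G →* MulAut N}

def subgroupProd (N₀ : Subgroup N) (G₀ : Subgroup G)
    (hφ : ∀ g ∈ G₀, ∀ n ∈ N₀, φ g n ∈ N₀) : Subgroup (N ⋊[φ] G) where
  carrier := {p | p.left ∈ N₀ ∧ p.right ∈ G₀}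
  one_mem' := ⟨N₀.one_mem, G₀.one_mem⟩
  mul_mem' := fun ⟨hpl, hpr⟩ ⟨hql, hqr⟩ =>
    ⟨N₀.mul_mem hpl (hφ _ hpr _ hql), G₀.mul_mem hpr hqr⟩
  inv_mem' := fun ⟨hpl, hpr⟩ =>
    ⟨hφ _ (G₀.inv_mem hpr) _ (N₀.inv_mem hpl), G₀.inv_mem hpr⟩

theorem closure_inl_union_inr_le_comap_rightHom (A : Set N) (G₀ : Subgroup G) :
    Subgroup.closure (inl '' A ∪ inr '' (G₀ : Set G) : Set (N ⋊[φ] G)) ≤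
      G₀.comap rightHom := by
  rw [Subgroup.closure_le]
  rintro _ (⟨a, -, rfl⟩ | ⟨g, hg, rfl⟩)
  · simp [G₀.one_mem]
  · simpa using hg

theorem finite_biUnion_support_of_closure_fg {N H S M : Type*} [Group N]
    [Group H] [MulAction H S] [AddCommGroup M] {φ : H →* MulAut N}
    (ψ : N →* Multiplicative (S →₀ M))
    (hψ : ∀ h a, ((ψ (φ h a)).toAdd.support : Set S) = h • ((ψ a).toAdd.support : Set S))
    {H₀ : Subgroup H} (hH₀ : (H₀ : Set H).Finite) {A : Set N}
    (hfg : (Subgroup.closure (inl '' A ∪ inr '' (H₀ : Set H) : Set (N ⋊[φ] H))).FG) :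
    (⋃ a ∈ A, ((ψ a).toAdd.support : Set S)).Finite := by
  obtain ⟨F, hF⟩ := hfg
  set T₀ : Set S := ⋃ p ∈ (F : Set (N ⋊[φ] H)), ((ψ p.left).toAdd.support : Set S)
  set T : Set S := (H₀ : Set H) • T₀
  have hT₀ : T₀ ⊆ T := fun x hx => ⟨1, H₀.one_mem, x, hx, one_smul H x⟩
  have hT : ∀ h ∈ H₀, h • T = T := fun h hh => by
    rw [← smul_assoc, smul_coe_set hh]
  let N₀ : Subgroup N := (Finsupp.supported M ℤ T).toAddSubgroup.toSubgroup.comap ψ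
  have hN₀ : ∀ a, a ∈ N₀ ↔ ((ψ a).toAdd.support : Set S) ⊆ T := fun a =>
    Finsupp.mem_supported ℤ _
  let K := subgroupProd N₀ H₀ fun h hh a ha => by
    rw [hN₀, hψ, ← hT h hh]
    exact Set.smul_set_mono ((hN₀ a).1 ha)
  have hFK : (F : Set (N ⋊[φ] H)) ⊆ K := fun p hp =>
    ⟨(hN₀ _).2 ((Set.subset_biUnion_of_mem hp).trans hT₀),
      closure_inl_union_inr_le_comap_rightHom A H₀ (hF ▸ Subgroup.subset_closure hp)⟩
  have hK : Subgroup.closure (inl '' A ∪ inr '' (H₀ : Set H)) ≤ K :=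
    hF ▸ (Subgroup.closure_le K).2 hFK
  have hTfin : T.Finite := hH₀.smul (F.finite_toSet.biUnion fun p _ => Finset.finite_toSet _)
  refine hTfin.subset (Set.iUnion₂_subset fun a ha => ?_)
  exact (hN₀ a).1 (hK (Subgroup.subset_closure (Or.inl ⟨a, ha, rfl⟩))).1

end SemidirectProduct

theorem ReflGroup.toAdd_map_eq_equivMapDomain {S : Type*} {L : S → S → S → Prop}
    {ψ : ReflGroup S L →* Multiplicative (S →₀ ZMod 2)}
    (hψ : ∀ x : S, ψ (tgen S L x) = Multiplicative.ofAdd (Finsupp.single x 1))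
    {f : ReflGroup S L ≃* ReflGroup S L} {σ : Equiv.Perm S}
    (hf : ∀ x, f (tgen S L x) = tgen S L (σ x)) (a : ReflGroup S L) :
    (ψ (f a)).toAdd = Finsupp.equivMapDomain σ (ψ a).toAdd := by
  have hcomp : ψ.comp f.toMonoidHom = (Finsupp.domCongr σ).toMultiplicative.toMonoidHom.comp ψ :=
    PresentedGroup.ext fun x => by
      change ψ (f (tgen S L x)) = .ofAdd (Finsupp.domCongr σ (ψ (tgen S L x)).toAdd)
      rw [hf, hψ, hψ, toAdd_ofAdd, Finsupp.domCongr_apply, Finsupp.equivMapDomain_single]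
  exact congrArg Multiplicative.toAdd (DFunLike.congr_fun hcomp a)

theorem ReflGroup.support_map_eq_smul {S : Type*} {L : S → S → S → Prop}
    {W : Subgroup (Equiv.Perm S)} {φ : W →* MulAut (ReflGroup S L)}
    (hφ : ∀ (w : W) (x : S), φ w (tgen S L x) = tgen S L (w.1 x))
    {ψ : ReflGroup S L →* Multiplicative (S →₀ ZMod 2)}
    (hψ : ∀ x : S, ψ (tgen S L x) = Multiplicative.ofAdd (Finsupp.single x 1))
    (w : W) (a : ReflGroup S L) :
    ((ψ (φ w a)).toAdd.support : Set S) = w • ((ψ a).toAdd.support : Set S) := by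
  rw [toAdd_map_eq_equivMapDomain hψ (hφ w), ← Set.image_smul]
  exact Finset.coe_map _ _

theorem stmt_2_general {S : Type*} (L : S → S → S → Prop)
    (W : Subgroup (Equiv.Perm S))
    (φ : W →* MulAut (ReflGroup S L))
    (hφ : ∀ (w : W) (x : S), φ w (tgen S L x) = tgen S L (w.1 x))
    (ψ : ReflGroup S L →* Multiplicative (S →₀ ZMod 2))
    (hψ : ∀ x : S, ψ (tgen S L x) = Multiplicative.ofAdd (Finsupp.single x 1))
    (W' : Subgroup W) (hW' : (W' : Set W).Finite)
    {I : Type*} (g : I → ReflGroup S L)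
    (hinf : (⋃ i : I, ((Multiplicative.toAdd (ψ (g i))).support : Set S)).Infinite) :
    ¬ (Subgroup.closure
        ((SemidirectProduct.inl '' Set.range g ∪ SemidirectProduct.inr '' (W' : Set W)) :
          Set (ReflGroup S L ⋊[φ] W))).FG := fun hfg => by
  have := SemidirectProduct.finite_biUnion_support_of_closure_fg ψ
    (ReflGroup.support_map_eq_smul hφ hψ) hW' hfg
  rw [Set.biUnion_range] at this
  exact hinf this

/-- let `W` be a group of permutations of `S` preserving `L`, acting on `G_S` by
`w · t_x = t_{w(x)}`, and `G = G_S ⋊ W`. If `W' ⊆ W` is a finite subgroup and `(g_i)` is a family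
of elements of `G_S` with `⋃_i δ̃(g_i)` infinite, then the subgroup of `G` generated by `W'`
together with all the `g_i` is not finitely generated. -/
theorem stmt_2 {S : Type*} (L : S → S → S → Prop)
    (hsym₁ : ∀ x y z, L x y z → L y x z)
    (hsym₂ : ∀ x y z, L x y z → L x z y)
    (huniq : ∀ x y z z', L x y z → L x y z' → x ≠ y → z = z')
    (W : Subgroup (Equiv.Perm S))
    (hW : ∀ w ∈ W, ∀ x y z, L x y z → L (w x) (w y) (w z))
    (φ : W →* MulAut (ReflGroup S L))
    (hφ : ∀ (w : W) (x : S), φ w (tgen S L x) = tgen S L (w.1 x))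
    (ψ : ReflGroup S L →* Multiplicative (S →₀ ZMod 2))
    (hψ : ∀ x : S, ψ (tgen S L x) = Multiplicative.ofAdd (Finsupp.single x 1))
    (W' : Subgroup W) (hW' : (W' : Set W).Finite)
    {I : Type*} (g : I → ReflGroup S L)
    (hinf : (⋃ i : I, ((Multiplicative.toAdd (ψ (g i))).support : Set S)).Infinite) :
    ¬ (Subgroup.closure
        ((SemidirectProduct.inl '' Set.range g ∪ SemidirectProduct.inr '' (W' : Set W)) :
          Set (ReflGroup S L ⋊[φ] W))).FG :=
  stmt_2_general L W φ hφ ψ hψ W' hW' g hinf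
end

section
/- Let (S, L) be an abstract cubic and let H be the normal closure in G_S of a family F of elements. Suppose F contains a subfamily (h_i)_{i∈I} satisfying condition (J): for every i ∈ I there exists x_i ∈ δ̃(h_i) such that x_i ∉ δ̃(h_j) for every j ∈ I with j ≠ i. Then for every subset T ⊆ G_S whose normal closure in G_S equals H, the cardinality of T is at least the cardinality of I. -/
/-- if `H` is the normal closure in `G_S` of a family `F` containing a subfamily
`(h_i)_{i ∈ I}` satisfying condition (J), then any subset `T ⊆ G_S` whose normal closure equals
`H` has cardinality at least that of `I`. -/
theorem stmt_3 {S : Type u} (L : S → S → S → Prop)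
    (hsym₁ : ∀ x y z, L x y z → L y x z)
    (hsym₂ : ∀ x y z, L x y z → L x z y)
    (huniq : ∀ x y z z', L x y z → L x y z' → x ≠ y → z = z')
    (ψ : ReflGroup S L →* Multiplicative (S →₀ ZMod 2))
    (hψ : ∀ x : S, ψ (tgen S L x) = Multiplicative.ofAdd (Finsupp.single x 1))
    (F : Set (ReflGroup S L)) {I : Type v} (h : I → ReflGroup S L)
    (hsub : ∀ i, h i ∈ F)
    (hJ : ∀ i : I, ∃ x : S, x ∈ (Multiplicative.toAdd (ψ (h i))).support ∧
      ∀ j : I, j ≠ i → x ∉ (Multiplicative.toAdd (ψ (h j))).support)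
    (T : Set (ReflGroup S L))
    (hT : Subgroup.normalClosure T = Subgroup.normalClosure F) :
    Cardinal.lift.{u} (Cardinal.mk I) ≤ Cardinal.lift.{v} (Cardinal.mk T) := by

  classical
  let v : I → (S →₀ ZMod 2) := fun i => Multiplicative.toAdd (ψ (h i))
  have hli : LinearIndependent (ZMod 2) v := by
    rw [linearIndependent_iff']
    intro s g hsum i hi
    obtain ⟨x, hxi, hxj⟩ := hJ i
    have hx := DFunLike.congr_fun hsum x
    rw [Finset.sum_apply'] at hx
    simp only [Finsupp.coe_zero, Pi.zero_apply] at hx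
    rw [Finset.sum_eq_single i] at hx
    · have hvx : v i x ≠ 0 := Finsupp.mem_support_iff.mp hxi
      have h0 : g i * v i x = 0 := by simpa [smul_eq_mul] using hx
      rcases mul_eq_zero.mp h0 with h1 | h1
      · exact h1
      · exact absurd h1 hvx
    · intro j _ hji
      have : v j x = 0 := Finsupp.notMem_support_iff.mp (hxj j hji)
      simp [this]
    · intro h'; exact absurd hi h'
  set P : Submodule (ZMod 2) (S →₀ ZMod 2) :=
    Submodule.span (ZMod 2) (Multiplicative.toAdd '' (ψ '' T)) with hP
  have hmem : ∀ i, v i ∈ P := by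
    intro i
    have h1 : h i ∈ Subgroup.normalClosure T := by
      rw [hT]; exact Subgroup.subset_normalClosure (hsub i)
    set Q : Subgroup (Multiplicative (S →₀ ZMod 2)) :=
      AddSubgroup.toSubgroup P.toAddSubgroup with hQ
    haveI hQn : Q.Normal := by
      constructor
      intro n hn g
      simpa [mul_comm, mul_assoc] using hn
    haveI : (Q.comap ψ).Normal := Subgroup.Normal.comap hQn ψ
    have hle : Subgroup.normalClosure T ≤ Subgroup.comap ψ Q := by
      apply Subgroup.normalClosure_le_normal
      intro t ht
      have : Multiplicative.toAdd (ψ t) ∈ P :=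
        Submodule.subset_span ⟨ψ t, ⟨t, ht, rfl⟩, rfl⟩
      exact this
    exact hle h1
  let w : I → P := fun i => ⟨v i, hmem i⟩
  have hliw : LinearIndependent (ZMod 2) w :=
    LinearIndependent.of_comp P.subtype hli
  have h1 : Cardinal.lift.{u} (Cardinal.mk I) ≤
      Cardinal.lift.{v} (Module.rank (ZMod 2) P) :=
    hliw.cardinal_lift_le_rank
  have h2 : Module.rank (ZMod 2) P ≤
      Cardinal.mk (Multiplicative.toAdd '' (ψ '' T)) := by
    rw [hP]; exact rank_span_le _
  have h3 : Cardinal.mk (Multiplicative.toAdd '' (ψ '' T)) ≤ Cardinal.mk T :=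
    Cardinal.mk_image_le.trans Cardinal.mk_image_le
  exact h1.trans (Cardinal.lift_le.mpr (h2.trans h3))
end

section
/- Let (S, L) be an abstract cubic and let H be the normal closure in G_S of a family F of elements that contains an infinite subfamily (h_i)_{i∈I} satisfying condition (J): for every i ∈ I there exists x_i ∈ δ̃(h_i) such that x_i ∉ δ̃(h_j) for every j ∈ I with j ≠ i. Then H is not the normal closure in G_S of any finite subset of G_S. -/
/-- if `H` is the normal closure in `G_S` of a family `F` containing an *infinite*
subfamily `(h_i)_{i ∈ I}` satisfying condition (J), then `H` is not the normal closure of any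
finite subset of `G_S`. -/
theorem stmt_4 {S : Type*} (L : S → S → S → Prop)
    (hsym₁ : ∀ x y z, L x y z → L y x z)
    (hsym₂ : ∀ x y z, L x y z → L x z y)
    (huniq : ∀ x y z z', L x y z → L x y z' → x ≠ y → z = z')
    (ψ : ReflGroup S L →* Multiplicative (S →₀ ZMod 2))
    (hψ : ∀ x : S, ψ (tgen S L x) = Multiplicative.ofAdd (Finsupp.single x 1))
    (F : Set (ReflGroup S L)) {I : Type*} [Infinite I] (h : I → ReflGroup S L)
    (hsub : ∀ i, h i ∈ F)
    (hJ : ∀ i : I, ∃ x : S, x ∈ (Multiplicative.toAdd (ψ (h i))).support ∧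
      ∀ j : I, j ≠ i → x ∉ (Multiplicative.toAdd (ψ (h j))).support) :
    ∀ T : Set (ReflGroup S L), T.Finite →
      Subgroup.normalClosure T ≠ Subgroup.normalClosure F := by
  intro T hT heq
  -- the union of supports of ψ t for t ∈ T
  set U : Set S := ⋃ t ∈ T, ((Multiplicative.toAdd (ψ t)).support : Set S) with hU
  have hUfin : U.Finite := hT.biUnion (fun t _ => (Multiplicative.toAdd (ψ t)).support.finite_toSet
  )
  -- the subgroup of elements with support contained in U
  let K : Subgroup (ReflGroup S L) :=
    { carrier := {g | ((Multiplicative.toAdd (ψ g)).support : Set S) ⊆ U}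
      one_mem' := by
        simp
      mul_mem' := by
        classical
        intro a b ha hb
        simp only [Set.mem_setOf_eq, map_mul, toAdd_mul] at *
        intro x hx
        rcases Finset.mem_union.mp (Finsupp.support_add hx) with h' | h'
        · exact ha h'
        · exact hb h' 
      inv_mem' := by
        intro a ha
        simp only [Set.mem_setOf_eq, map_inv, toAdd_inv, Finsupp.support_neg] at *
        exact ha }
  have hKnormal : K.Normal := by
    constructor
    intro n hn g
    have : ψ (g * n * g⁻¹) = ψ n := by
      rw [map_mul, map_mul, map_inv, mul_comm (ψ g) (ψ n), mul_assoc, mul_inv_cancel, mul_one]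
    show ((Multiplicative.toAdd (ψ (g * n * g⁻¹))).support : Set S) ⊆ U
    rw [this]; exact hn
  have hTK : T ⊆ K := by
    intro t ht x hx
    exact Set.mem_biUnion ht hx
  have hle : Subgroup.normalClosure T ≤ K :=
    Subgroup.normalClosure_le_normal hTK
  -- each h i lies in normalClosure F = normalClosure T ≤ K
  have hmem : ∀ i, ((Multiplicative.toAdd (ψ (h i))).support : Set S) ⊆ U := by
    intro i
    have : h i ∈ Subgroup.normalClosure T := by
      rw [heq]; exact Subgroup.subset_normalClosure (hsub i)
    exact hle this
  -- pick the witnesses x_i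
  choose x hx₁ hx₂ using hJ
  have hinj : Function.Injective x := by
    intro i j hij
    by_contra hne
    apply hx₂ i j (Ne.symm hne)
    rw [hij]; exact hx₁ j
  have : U.Infinite := Set.infinite_of_injective_forall_mem hinj (fun i => hmem i (hx₁ i))
  exact this hUfin
end

section
/- Let (S, L) be an abstract cubic with S infinite. Then G_S is not the normal closure in G_S of any finite subset of itself; in particular, G_S is not finitely generated. -/
/-- Map each generator to the corresponding basis vector of the `ZMod 2` free module. -/
noncomputable def fmap {S : Type*} (x : S) : Multiplicative (S →₀ ZMod 2) :=
  Multiplicative.ofAdd (Finsupp.single x 1)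

lemma add_self_finsupp {S : Type*} (v : S →₀ ZMod 2) : v + v = 0 := by
  ext s
  have h : ∀ b : ZMod 2, b + b = 0 := by decide
  simp [h]

lemma relsOne {S : Type*} (L : S → S → S → Prop) :
    ∀ r ∈ cubicRels S L, FreeGroup.lift (fmap (S := S)) r = 1 := by
  have key : ∀ v : S →₀ ZMod 2, Multiplicative.ofAdd v ^ 2 = 1 := fun v => by
    rw [pow_two, ← ofAdd_add, add_self_finsupp, ofAdd_zero]
  rintro r (⟨x, rfl⟩ | ⟨x, y, z, -, rfl⟩)
  · rw [map_pow, FreeGroup.lift_apply_of]; exact key _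
  · rw [map_pow, map_mul, map_mul, FreeGroup.lift_apply_of, FreeGroup.lift_apply_of, FreeGroup.lift_apply_of]
    simp only [fmap, ← ofAdd_add]
    exact key _

/-- if `S` is infinite then `G_S` is not the normal closure of any finite subset of
itself; in particular `G_S` is not finitely generated. -/
theorem stmt_5 {S : Type*} [Infinite S] (L : S → S → S → Prop)
    (hsym₁ : ∀ x y z, L x y z → L y x z)
    (hsym₂ : ∀ x y z, L x y z → L x z y)
    (huniq : ∀ x y z z', L x y z → L x y z' → x ≠ y → z = z') :
    (∀ T : Set (ReflGroup S L), T.Finite →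
        Subgroup.normalClosure T ≠ (⊤ : Subgroup (ReflGroup S L))) ∧
      ¬ Group.FG (ReflGroup S L) := by
  have main : ∀ T : Set (ReflGroup S L), T.Finite →
      Subgroup.normalClosure T ≠ (⊤ : Subgroup (ReflGroup S L)) := by
    intro T hT hTop
    classical
    let φ : ReflGroup S L →* Multiplicative (S →₀ ZMod 2) := PresentedGroup.toGroup (relsOne L)
    have himg : (φ '' T).Finite := hT.image φ
    let F : Finset S := himg.toFinset.sup (fun a => (Multiplicative.toAdd a).support)
    let H : Subgroup (Multiplicative (S →₀ ZMod 2)) :=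
      { carrier := {a | (Multiplicative.toAdd a).support ⊆ F}
        one_mem' := by simp
        mul_mem' := by
          intro a b ha hb
          simp only [Set.mem_setOf_eq, toAdd_mul] at *
          exact Finsupp.support_add.trans (Finset.union_subset ha hb)
        inv_mem' := by
          intro a ha
          simpa only [Set.mem_setOf_eq, toAdd_inv, Finsupp.support_neg] using ha }
    haveI hHn : H.Normal := Subgroup.normal_of_comm H
    haveI : (H.comap φ).Normal := hHn.comap φ
    have hsub : T ⊆ ↑(H.comap φ) := by
      intro g hg
      have : (Multiplicative.toAdd (φ g)).support ⊆ F :=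
        Finset.le_sup (f := fun a => (Multiplicative.toAdd a).support)
          (himg.mem_toFinset.mpr ⟨g, hg, rfl⟩)
      exact this
    have h1 : Subgroup.normalClosure T ≤ H.comap φ := Subgroup.normalClosure_le_normal hsub
    obtain ⟨x, hx⟩ := Infinite.exists_notMem_finset F
    have hmem : tgen S L x ∈ Subgroup.normalClosure T := by
      rw [hTop]; trivial
    have hφ : φ (tgen S L x) ∈ H := h1 hmem
    have hval : φ (tgen S L x) = fmap x := PresentedGroup.toGroup.of (relsOne L)
    rw [hval] at hφ
    have : (Finsupp.single x (1 : ZMod 2)).support ⊆ F := hφ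
    exact hx (this (by rw [Finsupp.support_single_ne_zero x one_ne_zero]; simp))
  refine ⟨main, fun hFG => ?_⟩
  obtain ⟨T, hTtop, hTfin⟩ := Group.fg_iff.mp hFG
  exact main T hTfin (top_le_iff.mp (hTtop ▸ Subgroup.closure_le_normalClosure (s := T)))
end

section
/- Let (S, L) be an abstract cubic and suppose there exists a sequence of pairs of triples ((x_n, y_n, z_n), (x_n', y_n, z_n')), n ∈ ℕ, with (x_n, y_n, z_n) ∈ L and (x_n', y_n, z_n') ∈ L, such that the points x_n are pairwise distinct and x_n ∉ {y_m, z_m, x_m', z_m'} for all m, n ∈ ℕ. Then B₀ is not the normal closure in G_S of any finite subset of G_S. -/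
/-- The set of generators of the subgroup `B₀ ⊆ G_S`: elements `t_a t_b t_c t_{a'} t_b t_{c'}`
for collinear triples `(a,b,c) ∈ L` and `(a',b,c') ∈ L` sharing the middle point `b`.
`B₀` itself is the normal closure of this set in `G_S`. -/
def B0Gens (S : Type*) (L : S → S → S → Prop) : Set (ReflGroup S L) :=
  {g | ∃ a b c a' c' : S, L a b c ∧ L a' b c' ∧
    g = tgen S L a * tgen S L b * tgen S L c * tgen S L a' * tgen S L b * tgen S L c'}

/-!
Every weight `w : S → ℤ` gives a homomorphism from `G_S` to the infinite dihedral group sending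
`t_s` to the reflection `sr (w s)`: a product of three reflections is again a reflection, so all
relators die. The generator `t_a t_b t_c t_{a'} t_b t_{c'}` of `B₀` goes to the translation
`r (w a' + w c' - w a - w c)`, so the zero weight kills `B₀`. Each element of a finite `T` only
involves finitely many generators, so for some `n` the indicator weight of `x n` agrees with the
zero weight on all of them and hence kills `T`, so also `B₀ = ⟨⟨T⟩⟩`; but it sends the generator
of `B₀` built from the `n`-th pair of triples to `r (-1) ≠ 1`.
-/

lemma Subgroup.exists_finite_mem_closure_image {G ι : Type*} [Group G] {f : ι → G} {g : G}
    (hg : g ∈ Subgroup.closure (Set.range f)) :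
    ∃ s : Set ι, s.Finite ∧ g ∈ Subgroup.closure (f '' s) := by
  induction hg using Subgroup.closure_induction with
  | mem _ h =>
    obtain ⟨i, rfl⟩ := h
    exact ⟨{i}, Set.finite_singleton i, Subgroup.subset_closure (by simp)⟩
  | one => exact ⟨∅, Set.finite_empty, Subgroup.one_mem _⟩
  | mul _ _ _ _ ha hb =>
    obtain ⟨s, hs, ha⟩ := ha
    obtain ⟨t, ht, hb⟩ := hb
    refine ⟨s ∪ t, hs.union ht, Subgroup.mul_mem _ ?_ ?_⟩
    · exact Subgroup.closure_mono (Set.image_mono Set.subset_union_left) ha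
    · exact Subgroup.closure_mono (Set.image_mono Set.subset_union_right) hb
  | inv _ _ h =>
    obtain ⟨s, hs, h⟩ := h
    exact ⟨s, hs, Subgroup.inv_mem _ h⟩

lemma PresentedGroup.exists_finite_mem_closure_of {α : Type*} {rels : Set (FreeGroup α)}
    (g : PresentedGroup rels) :
    ∃ s : Set α, s.Finite ∧ g ∈ Subgroup.closure (PresentedGroup.of '' s) :=
  Subgroup.exists_finite_mem_closure_image (by simp [PresentedGroup.closure_range_of])

lemma DihedralGroup.sr_mul_sr_mul_sr {n : ℕ} (a b c : ZMod n) :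
    sr a * sr b * sr c = sr (a - b + c) := by
  rw [sr_mul_sr, r_mul_sr]
  congr 1
  ring

namespace ReflGroup

open DihedralGroup

variable {S : Type*} {L : S → S → S → Prop} {n : ℕ}

def toDihedral (w : S → ZMod n) : ReflGroup S L →* DihedralGroup n :=
  PresentedGroup.toGroup (f := fun s => sr (w s)) <| by
    rintro r (⟨a, rfl⟩ | ⟨a, b, c, -, rfl⟩)
    · simp [sq]
    · simp [sq]

@[simp]
lemma toDihedral_tgen (w : S → ZMod n) (s : S) : toDihedral (L := L) w (tgen S L s) = sr (w s) :=
  PresentedGroup.toGroup.of _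

lemma toDihedral_b0gen (w : S → ZMod n) (a b c a' c' : S) :
    toDihedral w (tgen S L a * tgen S L b * tgen S L c * tgen S L a' * tgen S L b * tgen S L c') =
      r (w a' + w c' - w a - w c) := by
  simp only [map_mul, toDihedral_tgen]
  rw [sr_mul_sr_mul_sr, sr_mul_sr_mul_sr, sr_mul_sr]
  congr 1
  ring

lemma normalClosure_B0Gens_le_ker_toDihedral_zero :
    Subgroup.normalClosure (B0Gens S L) ≤ (toDihedral (n := n) 0).ker := by
  refine Subgroup.normalClosure_le_normal ?_
  rintro _ ⟨a, b, c, a', c', -, -, rfl⟩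
  simp [toDihedral_b0gen, r_zero]

lemma toDihedral_eq_of_eqOn {w w' : S → ZMod n} {s : Set S} (h : Set.EqOn w w' s)
    {g : ReflGroup S L} (hg : g ∈ Subgroup.closure (PresentedGroup.of '' s)) : toDihedral w g = toDihedral w' g := by
  refine MonoidHom.eqOn_closure ?_ hg
  rintro _ ⟨t, ht, rfl⟩
  change toDihedral w (tgen S L t) = toDihedral w' (tgen S L t)
  simp [h ht]

end ReflGroup

open ReflGroup in
theorem stmt_6_general {S : Type*} (L : S → S → S → Prop)
    (x y z x' z' : ℕ → S)
    (hL : ∀ n, L (x n) (y n) (z n))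
    (hL' : ∀ n, L (x' n) (y n) (z' n))
    (hxinj : Function.Injective x)
    (hdist : ∀ m n : ℕ, x n ≠ y m ∧ x n ≠ z m ∧ x n ≠ x' m ∧ x n ≠ z' m) :
    ∀ T : Set (ReflGroup S L), T.Finite →
      Subgroup.normalClosure T ≠ Subgroup.normalClosure (B0Gens S L) := by
  classical
  intro T hT hTB
  choose s hs hgs using fun g : ReflGroup S L => PresentedGroup.exists_finite_mem_closure_of g
  obtain ⟨n, hn⟩ : ∃ n, x n ∉ ⋃ t ∈ T, s t :=
    ((hT.biUnion fun t _ => hs t).preimage hxinj.injOn).infinite_compl.nonempty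
  let w : S → ZMod 0 := Pi.single (x n) 1
  have hT_ker : T ⊆ (toDihedral (L := L) w).ker := fun t ht => by
    have hw : Set.EqOn w 0 (s t) := fun u hu => Pi.single_eq_of_ne
      (fun hux => hn (Set.mem_biUnion ht (by rwa [← hux]))) 1
    change toDihedral w t = 1
    rw [toDihedral_eq_of_eqOn hw (hgs t)]
    exact normalClosure_B0Gens_le_ker_toDihedral_zero (hTB ▸ Subgroup.subset_normalClosure ht)
  have hB_ker : Subgroup.normalClosure (B0Gens S L) ≤ (toDihedral w).ker :=
    hTB ▸ Subgroup.normalClosure_le_normal hT_ker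
  have hb := hB_ker (Subgroup.subset_normalClosure
    ⟨x n, y n, z n, x' n, z' n, hL n, hL' n, rfl⟩)
  obtain ⟨-, hz, hx', hz'⟩ := hdist n n
  rw [MonoidHom.mem_ker, toDihedral_b0gen, DihedralGroup.one_def, DihedralGroup.r.injEq] at hb
  simp [w, hz.symm, hx'.symm, hz'.symm] at hb

/-- given a sequence of pairs of collinear triples `(xₙ, yₙ, zₙ), (xₙ', yₙ, zₙ')`
with the `xₙ` pairwise distinct and each `xₙ` distinct from all `y_m, z_m, x_m', z_m'`, the
subgroup `B₀` is not the normal closure in `G_S` of any finite subset. -/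
theorem stmt_6 {S : Type*} (L : S → S → S → Prop)
    (hsym₁ : ∀ x y z, L x y z → L y x z)
    (hsym₂ : ∀ x y z, L x y z → L x z y)
    (huniq : ∀ x y z z', L x y z → L x y z' → x ≠ y → z = z')
    (x y z x' z' : ℕ → S)
    (hL : ∀ n, L (x n) (y n) (z n))
    (hL' : ∀ n, L (x' n) (y n) (z' n))
    (hxinj : Function.Injective x)
    (hdist : ∀ m n : ℕ, x n ≠ y m ∧ x n ≠ z m ∧ x n ≠ x' m ∧ x n ≠ z' m) :
    ∀ T : Set (ReflGroup S L), T.Finite →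
      Subgroup.normalClosure T ≠ Subgroup.normalClosure (B0Gens S L) :=
  stmt_6_general L x y z x' z' hL hL' hxinj hdist
end

section
/- Let (S, L) be a total abstract cubic and define x ≈ x' iff x ≈_i x' for some i. Then ≈ is an equivalence relation on S, it is admissible, and it is universal: for every admissible equivalence relation R on S and all x, x' ∈ S, x ≈ x' implies that x and x' are R-equivalent. -/
/-- The approximating equivalence relations `≈_i` of §3: `≈_0` is equality, and `≈_{i+1}` is the
transitive closure of the relation `∼_{i+1}` (see `simR`). -/
def approxR {S : Type*} (L : S → S → S → Prop) : ℕ → S → S → Prop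
  | 0 => Eq
  | i + 1 => Relation.TransGen (fun x x' => x = x' ∨ ∃ u v u' v' : S,
      approxR L i u u' ∧ approxR L i v v' ∧ L u v x ∧ L u' v' x')

/-- The relations `∼_i` of §3: `∼_0` is equality, and `x ∼_{i+1} x'` iff `x = x'` or there are
`u ≈_i u'`, `v ≈_i v'` with `(u,v,x) ∈ L` and `(u',v',x') ∈ L`. -/
def simR {S : Type*} (L : S → S → S → Prop) : ℕ → S → S → Prop
  | 0 => Eq
  | i + 1 => fun x x' => x = x' ∨ ∃ u v u' v' : S,
      approxR L i u u' ∧ approxR L i v v' ∧ L u v x ∧ L u' v' x'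

/-- An equivalence relation `r` on `S` is admissible if on `S/r` the induced collinearity
relation `L/r` (three classes are collinear iff they contain representatives forming a
collinear triple) defines a composition: for all classes `X, Y` there is a unique class `Z`
with `(X,Y,Z) ∈ L/r`. -/
def AdmissibleRel {S : Type*} (L : S → S → S → Prop) (r : S → S → Prop) : Prop :=
  Equivalence r ∧
  ∀ x y : S, ∃ z : S,
    (∃ x' y' z' : S, r x x' ∧ r y y' ∧ r z z' ∧ L x' y' z') ∧
    ∀ w : S, (∃ x' y' w' : S, r x x' ∧ r y y' ∧ r w w' ∧ L x' y' w') → r z w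

section ApproxR

variable {S : Type*} (L : S → S → S → Prop)

theorem approxR_succ (i : ℕ) : approxR L (i + 1) = Relation.TransGen (simR L (i + 1)) := rfl

theorem approxR_le_approxR_succ (i : ℕ) : approxR L i ≤ approxR L (i + 1) := by
  induction i with
  | zero => rintro x _ rfl; exact .single (Or.inl rfl)
  | succ i ih =>
    refine Relation.TransGen.mono ?_
    rintro x x' (rfl | ⟨u, v, u', v', hu, hv, hx, hx'⟩)
    · exact Or.inl rfl
    · exact Or.inr ⟨u, v, u', v', ih _ _ hu, ih _ _ hv, hx, hx'⟩

theorem approxR_monotone : Monotone (approxR L) :=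
  monotone_nat_of_le_succ (approxR_le_approxR_succ L)

theorem approxR_equivalence (i : ℕ) : Equivalence (approxR L i) := by
  induction i with
  | zero => exact eq_equivalence
  | succ i ih =>
    have : Std.Symm (simR L (i + 1)) := ⟨by
      rintro x x' (rfl | ⟨u, v, u', v', hu, hv, hx, hx'⟩)
      · exact Or.inl rfl
      · exact Or.inr ⟨u', v', u, v, ih.symm hu, ih.symm hv, hx', hx⟩⟩
    rw [approxR_succ]
    exact ⟨fun _ => .single (Or.inl rfl), Std.Symm.symm _ _, .trans⟩

theorem equivalence_exists_approxR : Equivalence (fun x x' : S => ∃ i, approxR L i x x') where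
  refl _ := ⟨0, rfl⟩
  symm := fun ⟨i, h⟩ => ⟨i, (approxR_equivalence L i).symm h⟩
  trans := fun ⟨i, h⟩ ⟨j, h'⟩ => ⟨max i j, (approxR_equivalence L _).trans
    (approxR_monotone L (le_max_left i j) _ _ h) (approxR_monotone L (le_max_right i j) _ _ h')⟩

-- The composite of the classes of `x` and `y` is the class of any `z` with `L x y z`.
theorem admissibleRel_exists_approxR (htotal : ∀ x y : S, ∃ z : S, L x y z) :
    AdmissibleRel L (fun x x' : S => ∃ i, approxR L i x x') := by
  have hequiv := equivalence_exists_approxR L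
  refine ⟨hequiv, fun x y => ?_⟩
  obtain ⟨z, hz⟩ := htotal x y
  refine ⟨z, ⟨x, y, z, hequiv.refl x, hequiv.refl y, hequiv.refl z, hz⟩, ?_⟩
  rintro w ⟨x', y', w', ⟨i, hx⟩, ⟨j, hy⟩, hw, hw'⟩
  have hzw' : approxR L (max i j + 1) z w' := .single <| Or.inr ⟨x, y, x', y',
    approxR_monotone L (le_max_left i j) _ _ hx, approxR_monotone L (le_max_right i j) _ _ hy,
    hz, hw'⟩
  exact hequiv.trans ⟨_, hzw'⟩ (hequiv.symm hw)

end ApproxR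

section AdmissibleRel

variable {S : Type*} {L : S → S → S → Prop} {r : S → S → Prop}

theorem AdmissibleRel.rel_of_L (hr : AdmissibleRel L r) {u v u' v' x x' : S}
    (hu : r u u') (hv : r v v') (hx : L u v x) (hx' : L u' v' x') : r x x' := by
  obtain ⟨z, -, hz⟩ := hr.2 u v
  exact hr.1.trans (hr.1.symm (hz x ⟨u, v, x, hr.1.refl u, hr.1.refl v, hr.1.refl x, hx⟩))
    (hz x' ⟨u', v', x', hu, hv, hr.1.refl x', hx'⟩)

theorem AdmissibleRel.approxR_le (hr : AdmissibleRel L r) (i : ℕ) : approxR L i ≤ r := by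
  have : IsTrans S r := ⟨fun _ _ _ => hr.1.trans⟩
  induction i with
  | zero => rintro x _ rfl; exact hr.1.refl x
  | succ i ih =>
    refine Relation.transGen_minimal ?_
    rintro x x' (rfl | ⟨u, v, u', v', hu, hv, hx, hx'⟩)
    · exact hr.1.refl x
    · exact hr.rel_of_L (ih _ _ hu) (ih _ _ hv) hx hx'

end AdmissibleRel

theorem stmt_8_general {S : Type*} (L : S → S → S → Prop)
    (htotal : ∀ x y : S, ∃ z : S, L x y z) :
    Equivalence (fun x x' : S => ∃ i, approxR L i x x') ∧
    AdmissibleRel L (fun x x' : S => ∃ i, approxR L i x x') ∧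
    ∀ r : S → S → Prop, AdmissibleRel L r →
      ∀ x x' : S, (∃ i, approxR L i x x') → r x x' :=
  ⟨equivalence_exists_approxR L, admissibleRel_exists_approxR L htotal,
    fun _ hr _ _ ⟨i, h⟩ => hr.approxR_le i _ _ h⟩

/-- for a total abstract cubic, the relation `x ≈ x' ⟺ ∃ i, x ≈_i x'` is an
equivalence relation, it is admissible, and it is universal: it is finer than every admissible
equivalence relation. -/
theorem stmt_8 {S : Type*} (L : S → S → S → Prop)
    (hsym₁ : ∀ x y z, L x y z → L y x z)
    (hsym₂ : ∀ x y z, L x y z → L x z y)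
    (huniq : ∀ x y z z', L x y z → L x y z' → x ≠ y → z = z')
    (htotal : ∀ x y : S, ∃ z : S, L x y z) :
    Equivalence (fun x x' : S => ∃ i, approxR L i x x') ∧
    AdmissibleRel L (fun x x' : S => ∃ i, approxR L i x x') ∧
    ∀ r : S → S → Prop, AdmissibleRel L r →
      ∀ x x' : S, (∃ i, approxR L i x x') → r x x' :=
  stmt_8_general L htotal
end

section
/- Let (S, L) be a total abstract cubic, G_S its reflection group, B₀ the normal closure in G_S of {t_a t_b t_c t_{a'} t_b t_{c'} : (a,b,c) ∈ L, (a',b,c') ∈ L}, and for each i ≥ 0 let Bⁱ be the normal closure in G_S of {t_u t_{u'} : u ∼_i u'}. Suppose x ∼_i x', y ∼_i y', (x,y,z) ∈ L and (x',y',z') ∈ L. Then: (1) the cosets t_z t_{z'} Bⁱ and t_x t_y t_z t_{x'} t_{y'} t_{z'} Bⁱ coincide, i.e. (t_x t_y t_z t_{x'} t_{y'} t_{z'})⁻¹ (t_z t_{z'}) ∈ Bⁱ; (2) t_z t_{z'} ∈ B^{i+1}; and (3) B^{j} ⊆ B₀ for every j ≥ 0. -/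
/-- The subgroup `Bⁱ ⊆ G_S`: the normal closure of `{t_u t_{u'} : u ∼_i u'}`. -/
def Bn (S : Type*) (L : S → S → S → Prop) (i : ℕ) : Subgroup (ReflGroup S L) :=
  Subgroup.normalClosure {g | ∃ u u' : S, simR L i u u' ∧ g = tgen S L u * tgen S L u'}

section Relations

variable {S : Type*} {L : S → S → S → Prop}

lemma tgen_sq (x : S) : tgen S L x ^ 2 = 1 :=
  (map_pow _ _ _).symm.trans (PresentedGroup.one_of_mem (Or.inl ⟨x, rfl⟩))

lemma tgen_mul_self (x : S) : tgen S L x * tgen S L x = 1 := by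
  rw [← sq, tgen_sq]

lemma tgen_inv (x : S) : (tgen S L x)⁻¹ = tgen S L x :=
  inv_eq_of_mul_eq_one_right (tgen_mul_self x)

lemma tgen_mul_tgen_mul_tgen_sq {x y z : S} (h : L x y z) :
    (tgen S L x * tgen S L y * tgen S L z) ^ 2 = 1 := by
  have h2 := PresentedGroup.one_of_mem (rels := cubicRels S L) (Or.inr ⟨x, y, z, h, rfl⟩)
  rwa [map_pow, map_mul, map_mul] at h2

lemma tgen_five_eq_tgen {x y z : S} (h : L x y z) :
    tgen S L x * tgen S L y * tgen S L z * tgen S L x * tgen S L y = tgen S L z := by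
  have h2 := tgen_mul_tgen_mul_tgen_sq h
  rw [sq] at h2
  calc tgen S L x * tgen S L y * tgen S L z * tgen S L x * tgen S L y
      = (tgen S L x * tgen S L y * tgen S L z) * (tgen S L x * tgen S L y * tgen S L z) *
          (tgen S L z)⁻¹ := by group
    _ = tgen S L z := by rw [h2, one_mul, tgen_inv]

lemma mk_tgen_eq_iff {N : Subgroup (ReflGroup S L)} {u u' : S} :
    (tgen S L u : ReflGroup S L ⧸ N) = tgen S L u' ↔ tgen S L u * tgen S L u' ∈ N := by
  rw [QuotientGroup.eq, tgen_inv]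

lemma simR_le_approxR : ∀ i {u u' : S}, simR L i u u' → approxR L i u u'
  | 0, _, _, h => h
  | _ + 1, _, _, h => .single h

instance Bn.normal (i : ℕ) : (Bn S L i).Normal :=
  Subgroup.normalClosure_normal

end Relations

section Quotient

variable {S : Type*} {L : S → S → S → Prop} {N : Subgroup (ReflGroup S L)} [N.Normal]

lemma tgen_six_inv_mul_mem {x y z x' y' z' : S} (hx : tgen S L x * tgen S L x' ∈ N)
    (hy : tgen S L y * tgen S L y' ∈ N) (hz : L x y z) :
    (tgen S L x * tgen S L y * tgen S L z * tgen S L x' * tgen S L y' * tgen S L z')⁻¹ *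
      (tgen S L z * tgen S L z') ∈ N := by
  rw [← mk_tgen_eq_iff] at hx hy
  have h5 := congrArg (QuotientGroup.mk (s := N)) (tgen_five_eq_tgen hz)
  rw [← QuotientGroup.eq_one_iff]
  simp only [QuotientGroup.mk_mul, QuotientGroup.mk_inv] at h5 ⊢
  rw [← hx, ← hy, h5, inv_mul_cancel]

lemma mk_tgen_eq_of_L_of_L_same_mid (hN : B0Gens S L ⊆ N) {a b c a' c' : S} (h : L a b c)
    (h' : L a' b c')
    (ha : (tgen S L a : ReflGroup S L ⧸ N) = tgen S L a') :
    (tgen S L c : ReflGroup S L ⧸ N) = tgen S L c' := by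
  have hgen : ((tgen S L a * tgen S L b * tgen S L c * tgen S L a' * tgen S L b * tgen S L c' :
      ReflGroup S L) : ReflGroup S L ⧸ N) = 1 :=
    (QuotientGroup.eq_one_iff _).2 (hN ⟨a, b, c, a', c', h, h', rfl⟩)
  have h5 := congrArg (QuotientGroup.mk (s := N)) (tgen_five_eq_tgen h)
  simp only [QuotientGroup.mk_mul] at hgen h5
  rw [← ha, h5] at hgen
  rw [eq_inv_of_mul_eq_one_right hgen, ← QuotientGroup.mk_inv, tgen_inv]

lemma mk_tgen_eq_of_L_of_L (hN : B0Gens S L ⊆ N) (hsym : ∀ x y z, L x y z → L y x z)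
    (htotal : ∀ x y : S, ∃ z, L x y z) {a b u a' b' u' : S}
    (ha : (tgen S L a : ReflGroup S L ⧸ N) = tgen S L a')
    (hb : (tgen S L b : ReflGroup S L ⧸ N) = tgen S L b') (hu : L a b u) (hu' : L a' b' u') :
    (tgen S L u : ReflGroup S L ⧸ N) = tgen S L u' := by
  obtain ⟨c, hc⟩ := htotal a b'
  calc (tgen S L u : ReflGroup S L ⧸ N)
      = tgen S L c := mk_tgen_eq_of_L_of_L_same_mid hN (hsym _ _ _ hu) (hsym _ _ _ hc) hb
    _ = tgen S L u' := mk_tgen_eq_of_L_of_L_same_mid hN hc hu' ha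

lemma mk_tgen_eq_of_approxR (hN : B0Gens S L ⊆ N) (hsym : ∀ x y z, L x y z → L y x z)
    (htotal : ∀ x y : S, ∃ z, L x y z) :
    ∀ j {u u' : S}, approxR L j u u' → (tgen S L u : ReflGroup S L ⧸ N) = tgen S L u'
  | 0, _, _, rfl => rfl
  | j + 1, _, _, h => by
    have step : ∀ {v v' : S}, (v = v' ∨ ∃ a b a' b' : S, approxR L j a a' ∧ approxR L j b b' ∧
        L a b v ∧ L a' b' v') → (tgen S L v : ReflGroup S L ⧸ N) = tgen S L v' := by
      rintro _ _ (rfl | ⟨a, b, a', b', ha, hb, hu, hu'⟩)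
      · rfl
      · exact mk_tgen_eq_of_L_of_L hN hsym htotal (mk_tgen_eq_of_approxR hN hsym htotal j ha)
          (mk_tgen_eq_of_approxR hN hsym htotal j hb) hu hu'
    induction h with
    | single hstep => exact step hstep
    | tail _ hstep ih => exact ih.trans (step hstep)

lemma Bn_le_of_B0Gens_subset (hN : B0Gens S L ⊆ N) (hsym : ∀ x y z, L x y z → L y x z)
    (htotal : ∀ x y : S, ∃ z, L x y z) (j : ℕ) : Bn S L j ≤ N :=
  Subgroup.normalClosure_le_normal <| by
    rintro _ ⟨u, u', h, rfl⟩
    exact mk_tgen_eq_iff.1 (mk_tgen_eq_of_approxR hN hsym htotal j (simR_le_approxR j h))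

end Quotient

theorem stmt_11_general {S : Type*} (L : S → S → S → Prop)
    (hsym₁ : ∀ x y z, L x y z → L y x z)
    (htotal : ∀ x y : S, ∃ z : S, L x y z)
    (i : ℕ) (x y z x' y' z' : S)
    (hx : simR L i x x') (hy : simR L i y y')
    (hz : L x y z) (hz' : L x' y' z') :
    ((tgen S L x * tgen S L y * tgen S L z *
          tgen S L x' * tgen S L y' * tgen S L z')⁻¹ *
        (tgen S L z * tgen S L z') ∈ Bn S L i) ∧
    (tgen S L z * tgen S L z' ∈ Bn S L (i + 1)) ∧
    (∀ j : ℕ, Bn S L j ≤ Subgroup.normalClosure (B0Gens S L)) :=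
  ⟨tgen_six_inv_mul_mem (Subgroup.subset_normalClosure ⟨x, x', hx, rfl⟩)
      (Subgroup.subset_normalClosure ⟨y, y', hy, rfl⟩) hz,
    Subgroup.subset_normalClosure ⟨z, z', Or.inr ⟨x, y, x', y', simR_le_approxR i hx,
      simR_le_approxR i hy, hz, hz'⟩, rfl⟩,
    Bn_le_of_B0Gens_subset Subgroup.subset_normalClosure hsym₁ htotal⟩

/-- Lemma 4.2: if `x ∼_i x'`, `y ∼_i y'`, `(x,y,z) ∈ L` and `(x',y',z') ∈ L`,
then (1) `t_z t_{z'}` and `t_x t_y t_z t_{x'} t_{y'} t_{z'}` lie in the same coset of `Bⁱ`,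
(2) `t_z t_{z'} ∈ B^{i+1}`, and (3) `Bʲ ⊆ B₀` for every `j`. -/
theorem stmt_11 {S : Type*} (L : S → S → S → Prop)
    (hsym₁ : ∀ x y z, L x y z → L y x z)
    (hsym₂ : ∀ x y z, L x y z → L x z y)
    (huniq : ∀ x y z z', L x y z → L x y z' → x ≠ y → z = z')
    (htotal : ∀ x y : S, ∃ z : S, L x y z)
    (i : ℕ) (x y z x' y' z' : S)
    (hx : simR L i x x') (hy : simR L i y y')
    (hz : L x y z) (hz' : L x' y' z') :
    ((tgen S L x * tgen S L y * tgen S L z *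
          tgen S L x' * tgen S L y' * tgen S L z')⁻¹ *
        (tgen S L z * tgen S L z') ∈ Bn S L i) ∧
    (tgen S L z * tgen S L z' ∈ Bn S L (i + 1)) ∧
    (∀ j : ℕ, Bn S L j ≤ Subgroup.normalClosure (B0Gens S L)) :=
  stmt_11_general L hsym₁ htotal i x y z x' y' z' hx hy hz hz'
end

section
/- Let (S, L) be a total abstract cubic, G_S its reflection group, and B₀ the normal closure in G_S of {t_a t_b t_c t_{a'} t_b t_{c'} : (a,b,c) ∈ L, (a',b,c') ∈ L}. Assume that for every admissible equivalence relation R on S, the quotient E = S/R with its induced composition ∘ satisfies t_X ∘ t_Y ∘ t_{X∘Y} = t_{Y∘Y} as maps E → E, for all X, Y ∈ E (where t_X(W) := X ∘ W). Then for all x, y ∈ S: t_x t_y ∈ B₀ if and only if x ≈ y, i.e. the relation U defined by x U y ⇔ t_x t_y ∈ B₀ is exactly the universal admissible equivalence relation on S. -/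
/-!
Both directions pass through a quotient of `G_S`. Modulo `B₀` the product `t_a t_b t_c` of
a collinear triple depends only on its middle point `b`; by induction on `i`, this lets one
show that `x ≈_i y` forces `t_x = t_y` modulo `B₀`. Conversely, `G_S` acts on `E = S/≈` by
`t_a ↦ (W ↦ a ∘ W)`: the assumed identity says that a collinear triple acts as the involution
`t_{b∘b}`, so the defining relations hold and `B₀` acts trivially. Hence `t_x t_y ∈ B₀` gives
`t_x = t_y` on `E`, and evaluating at `x ∘ y` yields `[x] = [y]`.
-/

section UniversalRel

variable {S : Type*} {L : S → S → S → Prop}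

lemma approxR_refl : ∀ (i : ℕ) (x : S), approxR L i x x
  | 0, _ => rfl
  | _ + 1, _ => Relation.TransGen.single (Or.inl rfl)

lemma approxR_symm : ∀ (i : ℕ) {x y : S}, approxR L i x y → approxR L i y x
  | 0, _, _, h => h.symm
  | i + 1, _, _, h => by
    have step : ∀ {x y : S},
        (x = y ∨ ∃ u v u' v', approxR L i u u' ∧ approxR L i v v' ∧ L u v x ∧ L u' v' y) →
        (y = x ∨ ∃ u v u' v', approxR L i u u' ∧ approxR L i v v' ∧ L u v y ∧ L u' v' x) := by
      rintro x y (rfl | ⟨u, v, u', v', hu, hv, h, h'⟩)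
      exacts [Or.inl rfl, Or.inr ⟨u', v', u, v, approxR_symm i hu, approxR_symm i hv, h', h⟩]
    induction h with
    | single h => exact .single (step h)
    | tail _ h ih => exact .head (step h) ih

lemma approxR_succ_of_approxR : ∀ (i : ℕ) {x y : S}, approxR L i x y → approxR L (i + 1) x y
  | 0, _, _, rfl => Relation.TransGen.single (Or.inl rfl)
  | i + 1, _, _, h => Relation.TransGen.mono (fun _ _ => Or.imp_right
      fun ⟨u, v, u', v', hu, hv, h, h'⟩ =>
        ⟨u, v, u', v', approxR_succ_of_approxR i hu, approxR_succ_of_approxR i hv, h, h'⟩) _ _ h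

lemma approxR_mono {i j : ℕ} (hij : i ≤ j) {x y : S} (h : approxR L i x y) :
    approxR L j x y := by
  induction hij with
  | refl => exact h
  | step _ ih => exact approxR_succ_of_approxR _ ih

variable (L) in
/-- The universal admissible equivalence `≈`. -/
def univRel (x y : S) : Prop := ∃ i, approxR L i x y

lemma univRel_equivalence : Equivalence (univRel L) where
  refl x := ⟨0, approxR_refl 0 x⟩
  symm := fun ⟨i, h⟩ => ⟨i, approxR_symm i h⟩
  trans := fun ⟨i, h⟩ ⟨j, h'⟩ => ⟨max i j + 1,
    (approxR_succ_of_approxR _ (approxR_mono (le_max_left i j) h)).trans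
      (approxR_succ_of_approxR _ (approxR_mono (le_max_right i j) h'))⟩

lemma univRel_of_L {x y z x' y' z' : S} (h : L x y z) (h' : L x' y' z')
    (hx : univRel L x x') (hy : univRel L y y') : univRel L z z' := by
  obtain ⟨i, hx⟩ := hx
  obtain ⟨j, hy⟩ := hy
  exact ⟨max i j + 1, Relation.TransGen.single (Or.inr ⟨x, y, x', y',
    approxR_mono (le_max_left i j) hx, approxR_mono (le_max_right i j) hy, h, h'⟩)⟩

lemma admissibleRel_univRel (htotal : ∀ x y : S, ∃ z, L x y z) :
    AdmissibleRel L (univRel L) := by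
  have heqv := univRel_equivalence (L := L)
  refine ⟨heqv, fun x y => ?_⟩
  obtain ⟨z, hz⟩ := htotal x y
  refine ⟨z, ⟨x, y, z, heqv.refl x, heqv.refl y, heqv.refl z, hz⟩, ?_⟩
  rintro w ⟨x', y', w', hx, hy, hw, h⟩
  exact heqv.trans (univRel_of_L hz h hx hy) (heqv.symm hw)

end UniversalRel

namespace AdmissibleRel

variable {S : Type*} {L : S → S → S → Prop} {r : S → S → Prop} (h : AdmissibleRel L r)

abbrev setoid : Setoid S := ⟨r, h.1⟩

lemma rel_choose {x y x' y' w w' : S} (hx : r x x') (hy : r y y') (hw : r w w')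
    (hL : L x' y' w') : r (h.2 x y).choose w :=
  (h.2 x y).choose_spec.2 w ⟨x', y', w', hx, hy, hw, hL⟩

noncomputable def comp : Quotient h.setoid → Quotient h.setoid → Quotient h.setoid :=
  Quotient.map₂ (fun x y => (h.2 x y).choose) fun x x' hx y y' hy => by
    obtain ⟨x'', y'', z'', hx', hy', hz', hL⟩ := (h.2 x' y').choose_spec.1
    exact h.rel_choose (h.1.trans hx hx') (h.1.trans hy hy') hz' hL

lemma comp_mk {x y z : S} (hL : L x y z) :
    h.comp (Quotient.mk h.setoid x) (Quotient.mk h.setoid y) = Quotient.mk h.setoid z :=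
  Quotient.sound (h.rel_choose (h.1.refl x) (h.1.refl y) (h.1.refl z) hL)

lemma exists_L_mk (X Y : Quotient h.setoid) :
    ∃ x y z, L x y z ∧ Quotient.mk h.setoid x = X ∧ Quotient.mk h.setoid y = Y := by
  induction X, Y using Quotient.inductionOn₂ with
  | h x y =>
    obtain ⟨x', y', z', hx, hy, -, hL⟩ := (h.2 x y).choose_spec.1
    exact ⟨x', y', z', hL, Quotient.sound (h.1.symm hx), Quotient.sound (h.1.symm hy)⟩

lemma comp_comm (hsym₁ : ∀ x y z, L x y z → L y x z) (X Y : Quotient h.setoid) :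
    h.comp X Y = h.comp Y X := by
  obtain ⟨x, y, z, hL, rfl, rfl⟩ := h.exists_L_mk X Y
  rw [h.comp_mk hL, h.comp_mk (hsym₁ _ _ _ hL)]

lemma comp_comp_self (hsym₂ : ∀ x y z, L x y z → L x z y) (X W : Quotient h.setoid) :
    h.comp X (h.comp X W) = W := by
  obtain ⟨x, w, z, hL, rfl, rfl⟩ := h.exists_L_mk X W
  rw [h.comp_mk hL, h.comp_mk (hsym₂ _ _ _ hL)]

end AdmissibleRel

/-- An abstraction of `S/R` with its composition `∘`; `comp_comp_comp` is the identity
`t_X ∘ t_Y ∘ t_{X∘Y} = t_{Y∘Y}`. -/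
structure CubicModel {S : Type*} (L : S → S → S → Prop) (E : Type*) where
  comp : E → E → E
  proj : S → E
  comp_proj : ∀ x y z, L x y z → comp (proj x) (proj y) = proj z
  comp_comp_self : ∀ X, Function.Involutive (comp X)
  comp_comm : ∀ X Y, comp X Y = comp Y X
  comp_comp_comp : ∀ X Y W, comp X (comp Y (comp (comp X Y) W)) = comp (comp Y Y) W

namespace CubicModel

variable {S E : Type*} {L : S → S → S → Prop} (M : CubicModel L E)

lemma comp_triple {a b c : S} (hL : L a b c) (W : E) :
    M.comp (M.proj a) (M.comp (M.proj b) (M.comp (M.proj c) W)) =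
      M.comp (M.comp (M.proj b) (M.proj b)) W := by
  rw [← M.comp_proj a b c hL, M.comp_comp_comp]

noncomputable def reflAction : ReflGroup S L →* Equiv.Perm E :=
  PresentedGroup.toGroup
    (f := fun a => Function.Involutive.toPerm (M.comp (M.proj a)) (M.comp_comp_self _)) (by
      rintro _ (⟨a, rfl⟩ | ⟨a, b, c, hL, rfl⟩) <;> ext W <;>
        simp only [map_mul, FreeGroup.lift_apply_of, sq, Equiv.Perm.mul_apply,
          Function.Involutive.coe_toPerm, Equiv.Perm.one_apply]
      · exact M.comp_comp_self _ W
      · rw [M.comp_triple hL, M.comp_triple hL, M.comp_comp_self])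

lemma reflAction_tgen (a : S) (W : E) :
    M.reflAction (tgen S L a) W = M.comp (M.proj a) W := by
  simp [reflAction, tgen, PresentedGroup.toGroup.of]

lemma normalClosure_B0Gens_le_ker :
    Subgroup.normalClosure (B0Gens S L) ≤ M.reflAction.ker := by
  refine Subgroup.normalClosure_le_normal ?_
  rintro _ ⟨a, b, c, a', c', h, h', rfl⟩
  refine Equiv.ext fun W => ?_
  simp only [map_mul, Equiv.Perm.mul_apply, reflAction_tgen, Equiv.Perm.one_apply]
  rw [M.comp_triple h', M.comp_triple h, M.comp_comp_self]

lemma proj_eq_of_tgen_mul_tgen_mem {x y : S}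
    (hxy : tgen S L x * tgen S L y ∈ Subgroup.normalClosure (B0Gens S L)) :
    M.proj x = M.proj y := by
  have hact : ∀ W, M.comp (M.proj x) (M.comp (M.proj y) W) = W := fun W => by
    simpa [reflAction_tgen] using congrArg (· W) (M.normalClosure_B0Gens_le_ker hxy)
  set X := M.proj x
  set Y := M.proj y
  calc X = M.comp X (M.comp X X) := (M.comp_comp_self _ _).symm
    _ = M.comp X (M.comp X (M.comp Y (M.comp Y X))) := by rw [M.comp_comp_self Y]
    _ = M.comp X (M.comp X Y) := by rw [hact, M.comp_comm Y]
    _ = Y := M.comp_comp_self _ _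

end CubicModel

section Agreement

variable {S H : Type*} [Group H] {L : S → S → S → Prop} {τ : S → H}

variable (L τ) in
def TripleAgree (u u' : S) : Prop :=
  τ u = τ u' ∧ ∀ a c a' c', L a u c → L a' u' c' → τ a * τ u * τ c = τ a' * τ u' * τ c'

lemma tripleAgree_refl
    (hB : ∀ a b c a' c', L a b c → L a' b c' → τ a * τ b * τ c = τ a' * τ b * τ c') (u : S) :
    TripleAgree L τ u u :=
  ⟨rfl, fun a c a' c' => hB a u c a' c'⟩

lemma TripleAgree.trans (htotal : ∀ x y : S, ∃ z, L x y z) {u v w : S}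
    (huv : TripleAgree L τ u v) (hvw : TripleAgree L τ v w) : TripleAgree L τ u w := by
  refine ⟨huv.1.trans hvw.1, fun a c a' c' h h' => ?_⟩
  obtain ⟨d, hd⟩ := htotal v v
  exact (huv.2 a c v d h hd).trans (hvw.2 v d a' c' hd h')

lemma TripleAgree.of_L (hsym₂ : ∀ x y z, L x y z → L x z y)
    (hB : ∀ a b c a' c', L a b c → L a' b c' → τ a * τ b * τ c = τ a' * τ b * τ c')
    {p q u p' q' u' : S} (h : L p q u) (h' : L p' q' u')
    (hp : TripleAgree L τ p p') (hq : TripleAgree L τ q q') : TripleAgree L τ u u' := by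
  have hu : τ u = τ u' := by
    have key := hq.2 p u p' u' h h'
    rw [hp.1, hq.1, mul_assoc, mul_assoc] at key
    exact mul_left_cancel (mul_left_cancel key)
  refine ⟨hu, fun a c a' c' ha ha' => ?_⟩
  rw [hB a u c p q ha (hsym₂ _ _ _ h), hB a' u' c' p' q' ha' (hsym₂ _ _ _ h'), hp.1, hq.1, hu]

lemma tripleAgree_of_approxR (hsym₂ : ∀ x y z, L x y z → L x z y)
    (htotal : ∀ x y : S, ∃ z, L x y z)
    (hB : ∀ a b c a' c', L a b c → L a' b c' → τ a * τ b * τ c = τ a' * τ b * τ c') :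
    ∀ (i : ℕ) {u u' : S}, approxR L i u u' → TripleAgree L τ u u'
  | 0, u, _, rfl => tripleAgree_refl hB u
  | i + 1, _, _, h => by
    induction h using Relation.TransGen.trans_induction_on with
    | single h =>
      rcases h with rfl | ⟨p, q, p', q', hp, hq, h, h'⟩
      · exact tripleAgree_refl hB _
      · exact .of_L hsym₂ hB h h' (tripleAgree_of_approxR hsym₂ htotal hB i hp)
          (tripleAgree_of_approxR hsym₂ htotal hB i hq)
    | trans _ _ ih ih' => exact ih.trans htotal ih'

end Agreement

section ReflGroup

variable {S : Type*} {L : S → S → S → Prop}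

lemma tgen_triple_mul_self {a b c : S} (hL : L a b c) :
    tgen S L a * tgen S L b * tgen S L c * (tgen S L a * tgen S L b * tgen S L c) = 1 := by
  simpa [tgen, PresentedGroup.of, sq] using
    PresentedGroup.one_of_mem (rels := cubicRels S L) (Or.inr ⟨a, b, c, hL, rfl⟩)

lemma mk_tgen_triple_eq {a b c a' c' : S} (h : L a b c) (h' : L a' b c') :
    ((tgen S L a * tgen S L b * tgen S L c : ReflGroup S L) :
        ReflGroup S L ⧸ Subgroup.normalClosure (B0Gens S L)) =
      ↑(tgen S L a' * tgen S L b * tgen S L c') := by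
  rw [QuotientGroup.eq, inv_eq_of_mul_eq_one_left (tgen_triple_mul_self h)]
  exact Subgroup.subset_normalClosure ⟨a, b, c, a', c', h, h', by simp only [mul_assoc]⟩

lemma tgen_mul_tgen_mem_of_approxR (hsym₂ : ∀ x y z, L x y z → L x z y)
    (htotal : ∀ x y : S, ∃ z, L x y z) {i : ℕ} {x y : S} (hxy : approxR L i x y) :
    tgen S L x * tgen S L y ∈ Subgroup.normalClosure (B0Gens S L) := by
  set N := Subgroup.normalClosure (B0Gens S L)
  have hB : ∀ a b c a' c', L a b c → L a' b c' →
      (tgen S L a : ReflGroup S L ⧸ N) * tgen S L b * tgen S L c =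
        (tgen S L a' : ReflGroup S L ⧸ N) * tgen S L b * tgen S L c' := fun _ _ _ _ _ h h' => by
    simpa only [QuotientGroup.mk_mul] using mk_tgen_triple_eq h h'
  have hτ : (tgen S L x : ReflGroup S L ⧸ N) = tgen S L y :=
    (tripleAgree_of_approxR hsym₂ htotal hB i hxy).1
  rw [← QuotientGroup.eq_one_iff, QuotientGroup.mk_mul, hτ, ← QuotientGroup.mk_mul,
    tgen_mul_self, QuotientGroup.mk_one]

end ReflGroup

theorem stmt_13_general {S : Type*} (L : S → S → S → Prop)
    (hsym₁ : ∀ x y z, L x y z → L y x z)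
    (hsym₂ : ∀ x y z, L x y z → L x z y)
    (htotal : ∀ x y : S, ∃ z : S, L x y z)
    (hAb : ∀ (r : S → S → Prop) (hadm : AdmissibleRel L r)
      (comp : Quotient (⟨r, hadm.1⟩ : Setoid S) → Quotient (⟨r, hadm.1⟩ : Setoid S) →
        Quotient (⟨r, hadm.1⟩ : Setoid S)),
      (∀ x y z : S, L x y z →
        comp (Quotient.mk ⟨r, hadm.1⟩ x) (Quotient.mk ⟨r, hadm.1⟩ y) =
          Quotient.mk ⟨r, hadm.1⟩ z) →
      ∀ X Y W, comp X (comp Y (comp (comp X Y) W)) = comp (comp Y Y) W) :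
    ∀ x y : S,
      tgen S L x * tgen S L y ∈ Subgroup.normalClosure (B0Gens S L) ↔
        ∃ i, approxR L i x y := by
  intro x y
  refine ⟨fun hxy => ?_, fun ⟨i, hxy⟩ => tgen_mul_tgen_mem_of_approxR hsym₂ htotal hxy⟩
  have hadm := admissibleRel_univRel htotal
  let M : CubicModel L (Quotient hadm.setoid) :=
    { comp := hadm.comp
      proj := Quotient.mk hadm.setoid
      comp_proj := fun _ _ _ => hadm.comp_mk
      comp_comp_self := hadm.comp_comp_self hsym₂
      comp_comm := hadm.comp_comm hsym₁
      comp_comp_comp := hAb _ hadm hadm.comp fun _ _ _ => hadm.comp_mk }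
  exact Quotient.exact (M.proj_eq_of_tgen_mul_tgen_mem hxy)

/-- Theorem 4.1: assume that for every admissible equivalence relation `R` on `S`
the induced composition `∘` on `E = S/R` satisfies `t_X ∘ t_Y ∘ t_{X∘Y} = t_{Y∘Y}` as maps
`E → E`. Then `t_x t_y ∈ B₀` if and only if `x ≈ y`: the relation `U` defined by
`t_x t_y ∈ B₀` is exactly the universal admissible equivalence. -/
theorem stmt_13 {S : Type*} (L : S → S → S → Prop)
    (hsym₁ : ∀ x y z, L x y z → L y x z)
    (hsym₂ : ∀ x y z, L x y z → L x z y)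
    (huniq : ∀ x y z z', L x y z → L x y z' → x ≠ y → z = z')
    (htotal : ∀ x y : S, ∃ z : S, L x y z)
    (hAb : ∀ (r : S → S → Prop) (hadm : AdmissibleRel L r)
      (comp : Quotient (⟨r, hadm.1⟩ : Setoid S) → Quotient (⟨r, hadm.1⟩ : Setoid S) →
        Quotient (⟨r, hadm.1⟩ : Setoid S)),
      (∀ x y z : S, L x y z →
        comp (Quotient.mk ⟨r, hadm.1⟩ x) (Quotient.mk ⟨r, hadm.1⟩ y) =
          Quotient.mk ⟨r, hadm.1⟩ z) →
      ∀ X Y W, comp X (comp Y (comp (comp X Y) W)) = comp (comp Y Y) W) :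
    ∀ x y : S,
      tgen S L x * tgen S L y ∈ Subgroup.normalClosure (B0Gens S L) ↔
        ∃ i, approxR L i x y :=
  stmt_13_general L hsym₁ hsym₂ htotal hAb
end

section
/- Let (S, L) be a total abstract cubic and let R be an admissible equivalence relation on S with quotient E = S/R and induced composition ∘. Assume that t_X ∘ t_Y ∘ t_{X∘Y} = t_{Y∘Y} as maps E → E for all X, Y ∈ E, where t_X(W) := X ∘ W. Then each t_X is an involutive bijection of E, and there exists a group homomorphism φ from the reflection group G_S to the group of permutations of E such that φ(t_x) = t_{[x]} for every x ∈ S, where [x] denotes the R-class of x; its image is the subgroup of permutations of E generated by {t_X : X ∈ E}. -/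
/-! Since `L` is total and symmetric, `[x] ∘ ([x] ∘ [w]) = [w]`, so every `t_X` is an involution
of `E`. For `(x, y, z) ∈ L` we have `[x] ∘ [y] = [z]`, so the hypothesis says that
`t_[x] t_[y] t_[z] = t_{[y] ∘ [y]}`, again an involution. Hence both kinds of defining relators
of `G_S` act trivially, `t_x ↦ t_[x]` extends to `G_S`, and its image is generated by the
images of the generators. -/

theorem PresentedGroup.range_toGroup {α G : Type*} [Group G] {rels : Set (FreeGroup α)}
    {f : α → G} (h : ∀ r ∈ rels, FreeGroup.lift f r = 1) :
    (PresentedGroup.toGroup h).range = Subgroup.closure (Set.range f) := by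
  rw [MonoidHom.range_eq_map, ← PresentedGroup.closure_range_of, MonoidHom.map_closure,
    ← Set.range_comp]
  congr 2
  funext x
  exact PresentedGroup.toGroup.of h

theorem Function.Involutive.toPerm_sq {α : Type*} {f : α → α} (h : Function.Involutive f) :
    h.toPerm f ^ 2 = 1 :=
  Equiv.ext h

theorem lift_eq_one_of_mem_cubicRels {S G : Type*} [Group G] {L : S → S → S → Prop}
    {f : S → G} (hsq : ∀ x, f x ^ 2 = 1) (hL : ∀ x y z, L x y z → (f x * f y * f z) ^ 2 = 1) :
    ∀ ρ ∈ cubicRels S L, FreeGroup.lift f ρ = 1 := by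
  rintro ρ (⟨x, rfl⟩ | ⟨x, y, z, hxyz, rfl⟩)
  · simpa using hsq x
  · simpa using hL x y z hxyz

section Composition

variable {S E : Type*} {L : S → S → S → Prop} {q : S → E} {comp : E → E → E}

theorem comp_involutive (hsym₂ : ∀ x y z, L x y z → L x z y) (htotal : ∀ x y, ∃ z, L x y z)
    (hq : Function.Surjective q) (hcomp : ∀ x y z, L x y z → comp (q x) (q y) = q z) (X : E) :
    Function.Involutive (comp X) := by
  intro W
  obtain ⟨x, rfl⟩ := hq X
  obtain ⟨w, rfl⟩ := hq W
  obtain ⟨z, hxwz⟩ := htotal x w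
  rw [hcomp x w z hxwz, hcomp x z w (hsym₂ _ _ _ hxwz)]

theorem comp_comp_comp_of_cubic (hcomp : ∀ x y z, L x y z → comp (q x) (q y) = q z)
    (hAb : ∀ X Y W, comp X (comp Y (comp (comp X Y) W)) = comp (comp Y Y) W)
    {x y z : S} (hxyz : L x y z) (W : E) :
    comp (q x) (comp (q y) (comp (q z) W)) = comp (comp (q y) (q y)) W := by
  rw [← hcomp x y z hxyz]
  exact hAb _ _ W

end Composition

theorem range_toPerm_of_involutive {E : Type*} {comp : E → E → E}
    (hinv : ∀ X, Function.Involutive (comp X)) :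
    Set.range (fun X => (hinv X).toPerm) = {e : Equiv.Perm E | ∃ X, ⇑e = comp X} := by
  ext e
  constructor
  · rintro ⟨X, rfl⟩
    exact ⟨X, rfl⟩
  · rintro ⟨X, hX⟩
    exact ⟨X, Equiv.coe_fn_injective hX.symm⟩

theorem stmt_14_general {S : Type*} (L : S → S → S → Prop)
    (hsym₂ : ∀ x y z, L x y z → L x z y)
    (htotal : ∀ x y : S, ∃ z : S, L x y z)
    (r : S → S → Prop) (hadm : AdmissibleRel L r)
    (comp : Quotient (⟨r, hadm.1⟩ : Setoid S) → Quotient (⟨r, hadm.1⟩ : Setoid S) →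
      Quotient (⟨r, hadm.1⟩ : Setoid S))
    (hcomp : ∀ x y z : S, L x y z →
      comp (Quotient.mk ⟨r, hadm.1⟩ x) (Quotient.mk ⟨r, hadm.1⟩ y) =
        Quotient.mk ⟨r, hadm.1⟩ z)
    (hAb : ∀ X Y W, comp X (comp Y (comp (comp X Y) W)) = comp (comp Y Y) W) :
    (∀ X, Function.Involutive (comp X) ∧ Function.Bijective (comp X)) ∧
    ∃ φ : ReflGroup S L →* Equiv.Perm (Quotient (⟨r, hadm.1⟩ : Setoid S)),
      (∀ x : S, ⇑(φ (tgen S L x)) = comp (Quotient.mk ⟨r, hadm.1⟩ x)) ∧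
      φ.range = Subgroup.closure {e : Equiv.Perm (Quotient (⟨r, hadm.1⟩ : Setoid S)) |
        ∃ X, ⇑e = comp X} := by
  have hinv := comp_involutive hsym₂ htotal Quotient.mk_surjective hcomp
  let t X := (hinv X).toPerm
  have hrels : ∀ ρ ∈ cubicRels S L, FreeGroup.lift (fun x => t ⟦x⟧) ρ = 1 := by
    refine lift_eq_one_of_mem_cubicRels (fun x => (hinv _).toPerm_sq) fun x y z hxyz => ?_
    have hprod : t ⟦x⟧ * t ⟦y⟧ * t ⟦z⟧ = t (comp ⟦y⟧ ⟦y⟧) :=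
      Equiv.ext (comp_comp_comp_of_cubic hcomp hAb hxyz)
    rw [hprod]
    exact (hinv _).toPerm_sq
  refine ⟨fun X => ⟨hinv X, (hinv X).bijective⟩, PresentedGroup.toGroup hrels,
    fun x => congrArg DFunLike.coe (PresentedGroup.toGroup.of hrels), ?_⟩
  rw [PresentedGroup.range_toGroup, Set.range_comp' t, Quotient.mk_surjective.range_eq,
    Set.image_univ, range_toPerm_of_involutive hinv]

/-- Lemma 4.3: let `R` (here `r`) be an admissible equivalence relation on `S`
with quotient `E = S/R` and induced composition `∘` (here `comp`), satisfying
`t_X ∘ t_Y ∘ t_{X∘Y} = t_{Y∘Y}` as maps `E → E`. Then each `t_X = comp X` is an involutive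
bijection of `E`, and there is a group homomorphism `φ : G_S → Perm E` with `φ(t_x) = t_{[x]}`
whose image is the subgroup generated by the permutations `t_X`, `X ∈ E`. -/
theorem stmt_14 {S : Type*} (L : S → S → S → Prop)
    (hsym₁ : ∀ x y z, L x y z → L y x z)
    (hsym₂ : ∀ x y z, L x y z → L x z y)
    (huniq : ∀ x y z z', L x y z → L x y z' → x ≠ y → z = z')
    (htotal : ∀ x y : S, ∃ z : S, L x y z)
    (r : S → S → Prop) (hadm : AdmissibleRel L r)
    (comp : Quotient (⟨r, hadm.1⟩ : Setoid S) → Quotient (⟨r, hadm.1⟩ : Setoid S) →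
      Quotient (⟨r, hadm.1⟩ : Setoid S))
    (hcomp : ∀ x y z : S, L x y z →
      comp (Quotient.mk ⟨r, hadm.1⟩ x) (Quotient.mk ⟨r, hadm.1⟩ y) =
        Quotient.mk ⟨r, hadm.1⟩ z)
    (hAb : ∀ X Y W, comp X (comp Y (comp (comp X Y) W)) = comp (comp Y Y) W) :
    (∀ X, Function.Involutive (comp X) ∧ Function.Bijective (comp X)) ∧
    ∃ φ : ReflGroup S L →* Equiv.Perm (Quotient (⟨r, hadm.1⟩ : Setoid S)),
      (∀ x : S, ⇑(φ (tgen S L x)) = comp (Quotient.mk ⟨r, hadm.1⟩ x)) ∧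
      φ.range = Subgroup.closure {e : Equiv.Perm (Quotient (⟨r, hadm.1⟩ : Setoid S)) |
        ∃ X, ⇑e = comp X} :=
  stmt_14_general L hsym₂ htotal r hadm comp hcomp hAb
end

section
/- Let A be an abelian group and a ∈ A, with composition X ∘ Y := a - X - Y and reflections t_Z(W) = Z ∘ W. Let R be an equivalence relation on A such that (i) if u R u' and v R v' then (u ∘ v) R (u' ∘ v'), and (ii) (z ∘ z) R z for every z ∈ A. Let t = t_{z₁} ∘ t_{z₂} ∘ ⋯ ∘ t_{z_n} be a finite composition of reflections and t⁻¹ = t_{z_n} ∘ ⋯ ∘ t_{z₁} its inverse. Then for all x, y ∈ A, the element t⁻¹(t(x) ∘ t(y)) is R-equivalent to x ∘ y. -/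
/-- The symmetric quasigroup composition `X ∘ Y := a - X - Y` on an abelian group `A` with a
fixed element `a` (the composition of points on a plane cubic curve in terms of its group law). -/
def cubComp {A : Type*} [AddCommGroup A] (a : A) (X Y : A) : A := a - X - Y

/-- The reflection `t_Z : A → A`, `t_Z(W) = Z ∘ W = a - Z - W`. -/
def cubRefl {A : Type*} [AddCommGroup A] (a : A) (Z W : A) : A := cubComp a Z W

/-- The composite `t_{z₁} ∘ t_{z₂} ∘ ⋯ ∘ t_{z_n}` of the reflections attached to the entries of
a list `zs = [z₁, …, z_n]`, applied to `v`. -/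
def applyRefls {A : Type*} [AddCommGroup A] (a : A) (zs : List A) (v : A) : A :=
  zs.foldr (cubRefl a) v

/-- Lemma 5.6: let `R` be an equivalence relation compatible with `∘` and with
`(z ∘ z) R z` for all `z`. For `t = t_{z₁} ∘ ⋯ ∘ t_{z_n}` and `t⁻¹ = t_{z_n} ∘ ⋯ ∘ t_{z₁}`,
one has `t⁻¹(t(x) ∘ t(y)) R (x ∘ y)` for all `x, y`. -/
theorem stmt_16 {A : Type*} [AddCommGroup A] (a : A)
    (R : A → A → Prop) (hR : Equivalence R)
    (hcompat : ∀ u u' v v' : A, R u u' → R v v' → R (cubComp a u v) (cubComp a u' v'))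
    (hidem : ∀ z : A, R (cubComp a z z) z)
    (zs : List A) (x y : A) :
    R (applyRefls a zs.reverse (cubComp a (applyRefls a zs x) (applyRefls a zs y)))
      (cubComp a x y) := by
  have hpres : ∀ (l : List A) (u v : A), R u v → R (applyRefls a l u) (applyRefls a l v) := by
    intro l
    induction l with
    | nil => intro u v h; exact h
    | cons z l ih =>
      intro u v h
      exact hcompat _ _ _ _ (hR.refl z) (ih u v h)
  induction zs with
  | nil => exact hR.refl _
  | cons z zs ih =>
    have hrev : ∀ w : A, applyRefls a (z :: zs).reverse w
        = applyRefls a zs.reverse (cubRefl a z w) := by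
      intro w
      simp [applyRefls, List.foldr_append]
    rw [hrev]
    set T : A → A := applyRefls a zs with hT
    have hstep : cubComp a (cubRefl a z (T x)) (cubRefl a z (T y))
        = cubComp a (cubComp a z z) (cubComp a (T x) (T y)) := by
      simp only [cubComp, cubRefl]; abel
    have h1 : R (cubComp a (cubRefl a z (T x)) (cubRefl a z (T y)))
        (cubComp a z (cubComp a (T x) (T y))) := by
      rw [hstep]
      exact hcompat _ _ _ _ (hidem z) (hR.refl _)
    have h2 : R (cubRefl a z (cubComp a (cubRefl a z (T x)) (cubRefl a z (T y))))
        (cubComp a (T x) (T y)) := by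
      have := hcompat z z _ _ (hR.refl z) h1
      have hinv : cubComp a z (cubComp a z (cubComp a (T x) (T y)))
          = cubComp a (T x) (T y) := by
        simp only [cubComp]; abel
      simpa [cubRefl, hinv] using this
    have h3 := hpres zs.reverse _ _ h2
    have hTx : applyRefls a (z :: zs) x = cubRefl a z (T x) := rfl
    have hTy : applyRefls a (z :: zs) y = cubRefl a z (T y) := rfl
    rw [hTx, hTy]
    exact hR.trans h3 ih
end
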